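/- arXiv:2310.07369 — 3 statements merged into one kernel-verified Lean document; each statement's English description precedes it below -/
import Mathlib

section
/- The intersection of the topological boundary ∂Γ with the closure of the positive cone Γ_+^n equals the union of the cones Γ_+^m over 0 ≤ m < m_*; that is, ∂Γ ∩ cl(Γ_+^n) = ⋃_{0 ≤ m < m_*} Γ_+^m. -/
noncomputable section

/-- `ℝ^n` with the Euclidean norm. -/
abbrev EV (n : ℕ) := EuclideanSpace ℝ (Fin n)

/-- The positive cone `ℝ^n_+`. -/
def posCone (n : ℕ) : Set (EV n) := {x | ∀ i, 0 < x i}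

/-- `Γ_+^m`: nonnegative vectors with exactly `m` positive coordinates (the remaining
`n - m` coordinates vanish); equivalently, all permutations of `(0,…,0,λ₁,…,λ_m)`
with every `λ_i > 0`. -/
def gammaPlus (n m : ℕ) : Set (EV n) :=
  {x | (∀ i, 0 ≤ x i) ∧ (Finset.univ.filter fun i => 0 < x i).card = m}

/-- Invariance under permutations of coordinates. -/
def PermSymm {n : ℕ} (Γ : Set (EV n)) : Prop :=
  ∀ (σ : Equiv.Perm (Fin n)) (x : EV n), x ∈ Γ → WithLp.toLp 2 (fun i => x (σ i)) ∈ Γ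

/-- `Γ` is a cone. -/
def IsConeSet {n : ℕ} (Γ : Set (EV n)) : Prop :=
  ∀ c : ℝ, 0 < c → ∀ x ∈ Γ, c • x ∈ Γ

/-!
An open convex cone `Γ` is stable under adding points of its closure, and the closed orthant lies
in `cl Γ` because `Γ` contains the positive cone. Hence `Γ` is upward closed for the coordinatewise
order on the orthant, and since it is also a cone, membership of a nonnegative `x` in `Γ` depends
only on the support of `x`; by symmetry, only on the size `m` of that support. So each `Γ_+^m` lies
either entirely inside `Γ` or entirely outside it, and the sets of the first kind are exactly those
with `m ≥ m_*`. The points of `∂Γ = cl Γ \ Γ` in the orthant are therefore those of `Γ_+^m`, `m < m_*`.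
-/

open Filter Topology Finset

lemma Convex.add_mem_of_mem_closure_of_isOpen {E : Type*} [AddCommGroup E] [Module ℝ E]
    [TopologicalSpace E] [IsTopologicalAddGroup E] [ContinuousConstSMul ℝ E] {Γ : Set E}
    (hΓc : Convex ℝ Γ) (hΓo : IsOpen Γ) (hΓcone : ∀ c : ℝ, 0 < c → ∀ x ∈ Γ, c • x ∈ Γ)
    {u v : E} (hu : u ∈ Γ) (hv : v ∈ closure Γ) : u + v ∈ Γ := by
  have hmid : (1 / 2 : ℝ) • u + (1 / 2 : ℝ) • v ∈ Γ := by
    simpa only [hΓo.interior_eq] using hΓc.combo_interior_closure_mem_interior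
      (hΓo.interior_eq.symm ▸ hu) hv (by norm_num) (by norm_num) (by norm_num)
  have h := hΓcone 2 two_pos _ hmid
  rwa [smul_add, smul_smul, smul_smul, show (2 : ℝ) * (1 / 2) = 1 by norm_num, one_smul,
    one_smul] at h

lemma Finset.exists_perm_mem_iff_mem {α : Type*} [Fintype α] {s t : Finset α} (h : #t = #s) :
    ∃ σ : Equiv.Perm α, ∀ i, σ i ∈ s ↔ i ∈ t := by
  classical
  let e : t ≃ s := Finset.equivOfCardEq h
  exact ⟨e.extendSubtype, fun i =>
    ⟨fun hi => by_contra fun hit => e.extendSubtype_not_mem i hit hi, e.extendSubtype_mem i⟩⟩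

lemma exists_pos_mul_le {ι : Type*} [Finite ι] {x y : ι → ℝ} (hy : ∀ i, 0 ≤ y i)
    (hxy : ∀ i, 0 < x i → 0 < y i) : ∃ c > 0, ∀ i, c * x i ≤ y i := by
  have hsmall : ∀ i, ∀ᶠ c in 𝓝[>] (0 : ℝ), c * x i ≤ y i := by
    intro i
    rcases le_or_gt (x i) 0 with hxi | hxi
    · filter_upwards [self_mem_nhdsWithin] with c hc
      exact (mul_nonpos_of_nonneg_of_nonpos (le_of_lt hc) hxi).trans (hy i)
    · have hlim : Tendsto (fun c => c * x i) (𝓝[>] 0) (𝓝 0) := by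
        have hcont : Continuous fun c : ℝ => c * x i := by fun_prop
        exact (hcont.tendsto' 0 0 (zero_mul _)).mono_left nhdsWithin_le_nhds
      exact (hlim.eventually (gt_mem_nhds (hxy i hxi))).mono fun _ => le_of_lt
  exact ((eventually_all.2 hsmall).and self_mem_nhdsWithin).exists.imp fun c hc => ⟨hc.2, hc.1⟩

variable {n : ℕ}

lemma closure_posCone : closure (posCone n) = {x : EV n | ∀ i, 0 ≤ x i} := by
  refine subset_antisymm (closure_minimal (fun x hx i => (hx i).le) ?_) fun x hx => ?_
  · simpa only [Set.ofPred_forall] using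
      isClosed_iInter fun i => isClosed_le continuous_const (PiLp.continuous_apply 2 _ i)
  · let one : EV n := WithLp.toLp 2 fun _ => 1
    have hlim : Tendsto (fun t : ℝ => x + t • one) (𝓝[>] 0) (𝓝 x) := by
      have hcont : Continuous fun t : ℝ => x + t • one := by fun_prop
      exact (hcont.tendsto' 0 x (by simp)).mono_left nhdsWithin_le_nhds
    refine mem_closure_of_tendsto hlim ?_
    filter_upwards [self_mem_nhdsWithin] with t (ht : 0 < t) i
    simpa [one] using add_pos_of_nonneg_of_pos (hx i) ht

lemma gammaPlus_self : gammaPlus n n = posCone n := by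
  ext x
  have hcard : #{i | 0 < x i} = n ↔ ∀ i, 0 < x i := by
    simpa using card_filter_eq_iff (s := (univ : Finset (Fin n))) (p := fun i => 0 < x i)
  simp only [gammaPlus, posCone, Set.mem_ofPred_eq, hcard]
  exact ⟨And.right, fun h => ⟨fun i => (h i).le, h⟩⟩

variable {Γ : Set (EV n)}

namespace IsConeSet

lemma mem_of_le (hΓcone : IsConeSet Γ) (hΓo : IsOpen Γ) (hΓc : Convex ℝ Γ)
    (hΓpos : posCone n ⊆ Γ) {x y : EV n} (hx : x ∈ Γ) (hxy : ∀ i, x i ≤ y i) : y ∈ Γ := by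
  have hdiff : y - x ∈ closure Γ := closure_mono hΓpos <| by
    rw [closure_posCone]
    exact fun i => sub_nonneg.2 (hxy i)
  simpa using hΓc.add_mem_of_mem_closure_of_isOpen hΓo hΓcone hx hdiff

lemma mem_of_pos_imp_pos (hΓcone : IsConeSet Γ) (hΓo : IsOpen Γ) (hΓc : Convex ℝ Γ)
    (hΓpos : posCone n ⊆ Γ) {x y : EV n} (hx : x ∈ Γ) (hy : ∀ i, 0 ≤ y i)
    (hxy : ∀ i, 0 < x i → 0 < y i) : y ∈ Γ := by
  obtain ⟨c, hc, hcxy⟩ := exists_pos_mul_le hy hxy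
  exact hΓcone.mem_of_le hΓo hΓc hΓpos (hΓcone c hc x hx) hcxy

lemma gammaPlus_subset_of_mem (hΓcone : IsConeSet Γ) (hΓo : IsOpen Γ) (hΓs : PermSymm Γ)
    (hΓc : Convex ℝ Γ) (hΓpos : posCone n ⊆ Γ) {m : ℕ} {x : EV n} (hx : x ∈ Γ)
    (hxm : x ∈ gammaPlus n m) : gammaPlus n m ⊆ Γ := by
  rintro y ⟨hy, hym⟩
  obtain ⟨σ, hσ⟩ := exists_perm_mem_iff_mem (hym.trans hxm.2.symm)
  refine hΓcone.mem_of_pos_imp_pos hΓo hΓc hΓpos (hΓs σ x hx) hy fun i hi => ?_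
  simpa using (hσ i).1 (by simpa using hi)

lemma gammaPlus_subset_of_le (hΓcone : IsConeSet Γ) (hΓo : IsOpen Γ) (hΓc : Convex ℝ Γ)
    (hΓpos : posCone n ⊆ Γ) {k m : ℕ} (hk : gammaPlus n k ⊆ Γ) (hkm : k ≤ m) :
    gammaPlus n m ⊆ Γ := by
  rintro x ⟨hx, rfl⟩
  obtain ⟨A, hAx, hAk⟩ := exists_subset_card_eq hkm
  let z : EV n := WithLp.toLp 2 fun i => if i ∈ A then x i else 0
  have hsupp : ({i | 0 < z i} : Finset (Fin n)) = A := by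
    ext i
    by_cases hi : i ∈ A
    · simpa [z, hi] using (mem_filter.1 (hAx hi)).2
    · simp [z, hi]
  have hz : z ∈ gammaPlus n k :=
    ⟨fun i => by by_cases hi : i ∈ A <;> simp [z, hi, hx i], hsupp ▸ hAk⟩
  refine hΓcone.mem_of_le hΓo hΓc hΓpos (hk hz) fun i => ?_
  by_cases hi : i ∈ A <;> simp [z, hi, hx i]

end IsConeSet

theorem stmt1_general (n : ℕ) (Γ : Set (EV n))
    (hΓo : IsOpen Γ) (hΓs : PermSymm Γ) (hΓc : Convex ℝ Γ)
    (hΓcone : IsConeSet Γ) (hΓpos : posCone n ⊆ Γ)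
    (mStar : ℕ) (hmStar : IsLeast {m : ℕ | gammaPlus n m ⊆ Γ} mStar) :
    frontier Γ ∩ closure (gammaPlus n n) = ⋃ m ∈ Finset.range mStar, gammaPlus n m := by
  have hmem_iff : ∀ m, ∀ x ∈ gammaPlus n m, x ∈ Γ ↔ mStar ≤ m := fun m x hxm =>
    ⟨fun hx => hmStar.2 (hΓcone.gammaPlus_subset_of_mem hΓo hΓs hΓc hΓpos hx hxm),
      fun hm => hΓcone.gammaPlus_subset_of_le hΓo hΓc hΓpos hmStar.1 hm hxm⟩
  ext x
  rw [hΓo.frontier_eq, gammaPlus_self, closure_posCone]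
  simp only [Set.mem_inter_iff, Set.mem_sdiff, Set.mem_iUnion, mem_range, exists_prop]
  constructor
  · rintro ⟨⟨-, hxΓ⟩, hx⟩
    exact ⟨_, not_le.1 fun h => hxΓ ((hmem_iff _ x ⟨hx, rfl⟩).2 h), hx, rfl⟩
  · rintro ⟨m, hm, hxm⟩
    have hxcl : x ∈ closure Γ := closure_mono hΓpos (closure_posCone ▸ hxm.1)
    exact ⟨⟨hxcl, fun hxΓ => ((hmem_iff m x hxm).1 hxΓ).not_gt hm⟩, hxm.1⟩

/-- `∂Γ ∩ cl(Γ_+^n) = ⋃_{0 ≤ m < m_*} Γ_+^m`, where `m_*` is the least `m`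
with `Γ_+^m ⊆ Γ`. -/
theorem stmt1 (n : ℕ) (hn : 2 ≤ n) (Γ : Set (EV n))
    (hΓo : IsOpen Γ) (hΓs : PermSymm Γ) (hΓc : Convex ℝ Γ)
    (hΓcone : IsConeSet Γ) (hΓpos : posCone n ⊆ Γ)
    (mStar : ℕ) (hmStar : IsLeast {m : ℕ | gammaPlus n m ⊆ Γ} mStar) :
    frontier Γ ∩ closure (gammaPlus n n) = ⋃ m ∈ Finset.range mStar, gammaPlus n m :=
  stmt1_general n Γ hΓo hΓs hΓc hΓcone hΓpos mStar hmStar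
end
end

section
/- Suppose Γ' satisfies the uniformity condition min_{0 ≤ m < m_IC} inf_{λ ∈ Γ', λ ≠ 0} dist(λ/|λ|, Γ_+^m) > 0. Then inf_{λ ∈ Γ', λ ≠ 0} dist(λ/|λ|, ∂Γ) > 0, where ∂Γ is the topological boundary of Γ. -/
noncomputable section

/-- Embed `(λ₁,…,λ_m) ∈ ℝ^m` into `ℝ^n` as `(0,…,0,λ₁,…,λ_m)` (with `n - m` zeros). -/
def padZero (n m : ℕ) (x : Fin m → ℝ) : EV n :=
  WithLp.toLp 2 (fun i : Fin n => if h : (i : ℕ) < n - m then 0 else x ⟨(i : ℕ) - (n - m), by omega⟩)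

/-- The positive cone `ℝ^m_+` (plain function version). -/
def posConeP (m : ℕ) : Set (Fin m → ℝ) := {x | ∀ i, 0 < x i}

/-- `f` is inverse-concave: `λ ↦ -f(λ₁⁻¹,…,λ_m⁻¹)` is concave on `ℝ^m_+`. -/
def InvConcave (m : ℕ) (f : (Fin m → ℝ) → ℝ) : Prop :=
  ConcaveOn ℝ (posConeP m) (fun x => - f (fun i => (x i)⁻¹))

/-- `f` is strictly inverse-concave: `λ ↦ -f(λ₁⁻¹,…,λ_m⁻¹)` is strictly concave on `ℝ^m_+`. -/
def StrictInvConcave (m : ℕ) (f : (Fin m → ℝ) → ℝ) : Prop :=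
  StrictConcaveOn ℝ (posConeP m) (fun x => - f (fun i => (x i)⁻¹))

/-- First derivative of a matrix function contracted against `B`:
`γ̇^{ij}(A) B_{ij} = (d/ds)|_{s=0} γ(A + sB)`. -/
def D1 {n : ℕ} (f : Matrix (Fin n) (Fin n) ℝ → ℝ) (A B : Matrix (Fin n) (Fin n) ℝ) : ℝ :=
  deriv (fun s : ℝ => f (A + s • B)) 0

/-- Second derivative of a matrix function contracted against `B, C`:
`γ̈^{ij,kl}(A) B_{ij} C_{kl} = ∂_s ∂_t|_{s=t=0} γ(A + sB + tC)`. -/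
def D2 {n : ℕ} (f : Matrix (Fin n) (Fin n) ℝ → ℝ)
    (A B C : Matrix (Fin n) (Fin n) ℝ) : ℝ :=
  deriv (fun s : ℝ => deriv (fun t : ℝ => f (A + s • B + t • C)) 0) 0

/-- Squared Frobenius norm `|S|² = Σ_{ij} S_{ij}²`. -/
def frobSq {n : ℕ} (S : Matrix (Fin n) (Fin n) ℝ) : ℝ := ∑ i, ∑ j, S i j ^ 2


lemma gammaPlus_step {n : ℕ} (Γ : Set (EV n)) (hΓc : Convex ℝ Γ) (k : ℕ) (hk : 1 ≤ k)
    (h : gammaPlus n k ⊆ Γ) : gammaPlus n (k + 1) ⊆ Γ := by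
  rintro y ⟨hy0, hycard⟩
  set S := Finset.univ.filter fun i => 0 < y i with hS
  have hScard : 1 < S.card := by omega
  obtain ⟨a, ha, b, hb, hab⟩ := Finset.one_lt_card.mp hScard
  have hya : 0 < y a := (Finset.mem_filter.mp ha).2
  have hyb : 0 < y b := (Finset.mem_filter.mp hb).2
  set u : EV n := WithLp.toLp 2 (fun i => if i = a then 2 * y a else if i = b then 0 else y i) with hu
  set v : EV n := WithLp.toLp 2 (fun i => if i = b then 2 * y b else if i = a then 0 else y i) with hv
  have hufilter : (Finset.univ.filter fun i => 0 < u i) = S.erase b := by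
    ext i
    simp only [hu, PiLp.toLp_apply, hS, Finset.mem_filter, Finset.mem_erase, Finset.mem_univ, true_and]
    by_cases hia : i = a
    · subst hia
      rw [if_pos rfl]
      constructor
      · intro _; exact ⟨hab, hya⟩
      · intro _; linarith
    · by_cases hib : i = b
      · subst hib
        rw [if_neg hia, if_pos rfl]
        simp
      · simp [hia, hib]
  have hvfilter : (Finset.univ.filter fun i => 0 < v i) = S.erase a := by
    ext i
    simp only [hv, PiLp.toLp_apply, hS, Finset.mem_filter, Finset.mem_erase, Finset.mem_univ, true_and]
    by_cases hib : i = b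
    · subst hib
      rw [if_pos rfl]
      constructor
      · intro _; exact ⟨Ne.symm hab, hyb⟩
      · intro _; linarith
    · by_cases hia : i = a
      · subst hia
        rw [if_neg hib, if_pos rfl]
        simp
      · simp [hia, hib]
  have huG : u ∈ Γ := by
    apply h
    refine ⟨?_, ?_⟩
    · intro i
      simp only [hu, PiLp.toLp_apply]
      split_ifs
      · linarith
      · exact le_refl 0
      · exact hy0 i
    · rw [hufilter, Finset.card_erase_of_mem hb]
      omega
  have hvG : v ∈ Γ := by
    apply h
    refine ⟨?_, ?_⟩
    · intro i
      simp only [hv, PiLp.toLp_apply]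
      split_ifs
      · linarith
      · exact le_refl 0
      · exact hy0 i
    · rw [hvfilter, Finset.card_erase_of_mem ha]
      omega
  have hcomb : (1/2 : ℝ) • u + (1/2 : ℝ) • v = y := by
    ext i
    simp only [PiLp.add_apply, PiLp.smul_apply, smul_eq_mul, hu, hv, PiLp.toLp_apply]
    by_cases hia : i = a
    · subst hia
      rw [if_pos rfl, if_neg hab, if_pos rfl]
      ring
    · by_cases hib : i = b
      · subst hib
        rw [if_neg hia, if_pos rfl, if_pos rfl]
        ring
      · rw [if_neg hia, if_neg hib, if_neg hib, if_neg hia]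
        ring
  have := hΓc huG hvG (by norm_num : (0:ℝ) ≤ 1/2) (by norm_num : (0:ℝ) ≤ 1/2)
    (by norm_num : (1/2 : ℝ) + 1/2 = 1)
  rwa [hcomb] at this

/-- Lemma 2.1: if the uniform distance condition to the cones `Γ_+^m`,
`m < m_IC`, holds on `Γ′`, then the normalized elements of `Γ′` stay uniformly away
from `∂Γ`. -/
theorem stmt2
    (n : ℕ) (hn : 2 ≤ n)
    (Γ : Set (EV n)) (hΓo : IsOpen Γ) (hΓs : PermSymm Γ) (hΓc : Convex ℝ Γ)
    (hΓcone : IsConeSet Γ) (hΓpos : posCone n ⊆ Γ)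
    (γ : EV n → ℝ)
    (hγsm : ContDiffOn ℝ (⊤ : ℕ∞) γ Γ)
    (hγpos : ∀ x ∈ Γ, 0 < γ x)
    (hγsymm : ∀ (σ : Equiv.Perm (Fin n)), ∀ x ∈ Γ, γ (WithLp.toLp 2 (fun i => x (σ i))) = γ x)
    (hγmono : ∀ x ∈ Γ, ∀ (i : Fin n) (t : ℝ), 0 < t →
      WithLp.toLp 2 (fun j => if j = i then x j + t else x j) ∈ Γ →
      γ x < γ (WithLp.toLp 2 (fun j => if j = i then x j + t else x j)))
    (hγhom : ∀ c : ℝ, 0 < c → ∀ x ∈ Γ, γ (c • x) = c * γ x)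
    (hγsic : StrictConcaveOn ℝ (posCone n) (fun x : EV n => - γ (WithLp.toLp 2 (fun i => (x i)⁻¹))))
    (mStar : ℕ) (hmStar : IsLeast {m : ℕ | gammaPlus n m ⊆ Γ} mStar)
    (mIC : ℕ)
    (hmIC : IsLeast {m : ℕ | mStar ≤ m ∧ ∀ m', m ≤ m' → m' ≤ n →
      StrictInvConcave m' (fun x => γ (padZero n m' x))} mIC)
    (Γ' : Set (EV n)) (hΓ'cl : IsClosed Γ') (hΓ's : PermSymm Γ') (hΓ'c : Convex ℝ Γ')
    (hΓ'cone : IsConeSet Γ') (hΓ'sub : Γ' ⊆ closure (gammaPlus n n))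
    (hunif : ∃ δ : ℝ, 0 < δ ∧ ∀ m < mIC, ∀ x ∈ Γ', x ≠ 0 →
      δ ≤ Metric.infDist (‖x‖⁻¹ • x) (gammaPlus n m))
    :
    ∃ δ : ℝ, 0 < δ ∧ ∀ x ∈ Γ', x ≠ 0 → δ ≤ Metric.infDist (‖x‖⁻¹ • x) (frontier Γ) := by
  classical
  obtain ⟨δ0, hδ0, hδ⟩ := hunif
  -- 0 is not in Γ
  have h0notΓ : (0 : EV n) ∉ Γ := by
    intro h0
    have h1 := hγhom 2 (by norm_num) 0 h0
    rw [smul_zero] at h1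
    have := hγpos 0 h0
    linarith
  -- 1 ≤ mStar
  have hmStar1 : 1 ≤ mStar := by
    by_contra h
    have hm0 : mStar = 0 := by omega
    have h0mem : (0 : EV n) ∈ gammaPlus n 0 := by
      refine ⟨fun i => le_refl 0, ?_⟩
      rw [Finset.card_eq_zero]
      apply Finset.filter_false_of_mem
      intro i _
      simp
    exact h0notΓ (hmStar.1 (hm0 ▸ h0mem))
  -- gammaPlus n j ⊆ Γ for all j ≥ mStar
  have hsub : ∀ j, mStar ≤ j → gammaPlus n j ⊆ Γ := by
    intro j hj
    induction j, hj using Nat.le_induction with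
    | base => exact hmStar.1
    | succ j hj ih => exact gammaPlus_step Γ hΓc j (le_trans hmStar1 hj) ih
  -- nonnegativity of coordinates on Γ'
  have hnonneg : ∀ x ∈ Γ', ∀ i, 0 ≤ x i := by
    intro x hx i
    have hcl : closure (gammaPlus n n) ⊆ {z : EV n | ∀ i, 0 ≤ z i} := by
      apply closure_minimal
      · intro z hz
        exact hz.1
      · have : {z : EV n | ∀ i, 0 ≤ z i} = ⋂ i, (fun z : EV n => z i) ⁻¹' Set.Ici 0 := by
          ext z; simp [Set.mem_iInter]
        rw [this]
        exact isClosed_iInter fun i =>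
          isClosed_Ici.preimage (EuclideanSpace.proj i).continuous
    exact hcl (hΓ'sub hx) i
  -- the compact set K
  set K : Set (EV n) := Γ' ∩ Metric.sphere (0 : EV n) 1 with hK
  have hKcomp : IsCompact K := (isCompact_sphere (0 : EV n) 1).inter_left hΓ'cl
  -- K ⊆ Γ
  have hKΓ : K ⊆ Γ := by
    rintro z ⟨hzΓ', hzs⟩
    have hz1 : ‖z‖ = 1 := by rwa [mem_sphere_zero_iff_norm] at hzs
    have hzne : z ≠ 0 := by
      intro h; rw [h, norm_zero] at hz1; norm_num at hz1
    set m := (Finset.univ.filter fun i => 0 < z i).card with hm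
    have hzmem : z ∈ gammaPlus n m := ⟨hnonneg z hzΓ', rfl⟩
    have hmge : mIC ≤ m := by
      by_contra h
      push_neg at h
      have h2 := hδ m h z hzΓ' hzne
      rw [hz1, inv_one, one_smul] at h2
      have h3 : Metric.infDist z (gammaPlus n m) = 0 := Metric.infDist_zero_of_mem hzmem
      linarith
    exact hsub m (le_trans hmIC.1.1 hmge) hzmem
  -- 0 ∈ frontier Γ
  have hone : (WithLp.toLp 2 (fun _ => (1:ℝ)) : EV n) ∈ Γ := hΓpos (fun i => by simp)
  have h0cl : (0 : EV n) ∈ closure Γ := by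
    have htend : Filter.Tendsto (fun c : ℝ => c • (WithLp.toLp 2 (fun _ => (1:ℝ)) : EV n))
        (nhdsWithin 0 (Set.Ioi 0)) (nhds (0 : EV n)) := by
      have : Filter.Tendsto (fun c : ℝ => c • (WithLp.toLp 2 (fun _ => (1:ℝ)) : EV n))
          (nhds 0) (nhds (0 : EV n)) := by
        have hc : Continuous (fun c : ℝ => c • (WithLp.toLp 2 (fun _ => (1:ℝ)) : EV n)) :=
          continuous_id.smul continuous_const
        have := hc.tendsto 0
        rwa [zero_smul] at this
      exact this.mono_left nhdsWithin_le_nhds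
    refine mem_closure_of_tendsto htend ?_
    filter_upwards [self_mem_nhdsWithin] with c hc
    exact hΓcone c hc _ hone
  have h0front : (0 : EV n) ∈ frontier Γ := by
    rw [hΓo.frontier_eq]
    exact ⟨h0cl, h0notΓ⟩
  have hfrne : (frontier Γ).Nonempty := ⟨0, h0front⟩
  -- points of K are away from frontier Γ
  have hKpos : ∀ z ∈ K, 0 < Metric.infDist z (frontier Γ) := by
    intro z hz
    rw [← (isClosed_frontier).notMem_iff_infDist_pos hfrne]
    intro hzf
    rw [hΓo.frontier_eq] at hzf
    exact hzf.2 (hKΓ hz)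
  rcases K.eq_empty_or_nonempty with hKe | hKne
  · refine ⟨1, one_pos, ?_⟩
    intro x hx hxne
    exfalso
    have hz : ‖x‖⁻¹ • x ∈ K := by
      constructor
      · exact hΓ'cone _ (inv_pos.mpr (norm_pos_iff.mpr hxne)) x hx
      · rw [mem_sphere_zero_iff_norm, norm_smul, norm_inv, norm_norm,
          inv_mul_cancel₀ (norm_ne_zero_iff.mpr hxne)]
    rw [hKe] at hz
    exact hz
  · obtain ⟨z0, hz0K, hz0min⟩ := hKcomp.exists_isMinOn hKne
      (Metric.continuous_infDist_pt (frontier Γ)).continuousOn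
    refine ⟨Metric.infDist z0 (frontier Γ), hKpos z0 hz0K, ?_⟩
    intro x hx hxne
    have hz : ‖x‖⁻¹ • x ∈ K := by
      constructor
      · exact hΓ'cone _ (inv_pos.mpr (norm_pos_iff.mpr hxne)) x hx
      · rw [mem_sphere_zero_iff_norm, norm_smul, norm_inv, norm_norm,
          inv_mul_cancel₀ (norm_ne_zero_iff.mpr hxne)]
    exact hz0min hz
end
end

section
/- Let k = n − m_IC + 1. Then Γ' satisfies the uniformity condition min_{0 ≤ m < m_IC} inf_{λ ∈ Γ', λ ≠ 0} dist(λ/|λ|, Γ_+^m) > 0 if and only if inf over nonzero λ ∈ Γ' of the minimum over all index sets i_1 < ... < i_k of (λ_{i_1} + ... + λ_{i_k}) / (λ_1 + ... + λ_n) is positive. -/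
noncomputable section

/-- Auxiliary: the squared Euclidean norm is the sum of squares of coordinates. -/
lemma ev_norm_sq (n : ℕ) (x : EV n) : ‖x‖ ^ 2 = ∑ i, x i ^ 2 := by
  rw [EuclideanSpace.norm_eq, Real.sq_sqrt (by positivity)]
  congr 1; funext i; rw [Real.norm_eq_abs, sq_abs]

/-- Auxiliary: the squared Euclidean distance is the sum of squared coordinate differences. -/
lemma ev_dist_sq (n : ℕ) (x y : EV n) : dist x y ^ 2 = ∑ i, (x i - y i) ^ 2 := by
  rw [EuclideanSpace.dist_eq, Real.sq_sqrt (by positivity)]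
  congr 1; funext i; rw [Real.dist_eq, sq_abs]

/-- Auxiliary: each coordinate difference is bounded by the distance. -/
lemma ev_coord_le_dist (n : ℕ) (x y : EV n) (i : Fin n) : |x i - y i| ≤ dist x y := by
  have h1 : (x i - y i) ^ 2 ≤ ∑ j, (x j - y j) ^ 2 :=
    Finset.single_le_sum (f := fun j => (x j - y j) ^ 2) (fun j _ => sq_nonneg _)
      (Finset.mem_univ i)
  have h2 := ev_dist_sq n x y
  nlinarith [dist_nonneg (x := x) (y := y), abs_nonneg (x i - y i), sq_abs (x i - y i)]

/-- Auxiliary: `gammaPlus n m` is nonempty for `m ≤ n`. -/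
lemma gp_nonempty (n m : ℕ) (hm : m ≤ n) : (gammaPlus n m).Nonempty := by
  refine ⟨(WithLp.toLp 2 (fun i : Fin n => if (i : ℕ) < m then (1:ℝ) else 0) : EV n), fun i => ?_, ?_⟩
  · show (0:ℝ) ≤ (if (i : ℕ) < m then (1:ℝ) else 0); split <;> norm_num
  · show (Finset.univ.filter fun i : Fin n => 0 < (if (i : ℕ) < m then (1:ℝ) else 0)).card = m
    have he : (Finset.univ.filter fun i : Fin n => 0 < (if (i : ℕ) < m then (1:ℝ) else 0))
        = Finset.map (Fin.castLEEmb hm) Finset.univ := by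
      ext i
      simp only [Finset.mem_filter, Finset.mem_univ, true_and, Finset.mem_map]
      constructor
      · intro h
        have hi : (i : ℕ) < m := by by_contra hc; simp [hc] at h
        refine ⟨⟨(i : ℕ), hi⟩, ?_⟩
        ext
        simp [Fin.castLEEmb]
      · rintro ⟨j, rfl⟩
        simp [Fin.castLEEmb, j.2]
    rw [he, Finset.card_map, Finset.card_univ, Fintype.card_fin]

/-- Lemma 2.4: with `k = n - m_IC + 1`, the uniformity condition holds
iff the elements of `Γ′` are uniformly `k`-positive:
`inf_{λ ∈ Γ′∖{0}} min_{i₁<⋯<i_k} (λ_{i₁}+⋯+λ_{i_k})/(λ₁+⋯+λ_n) > 0`. -/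

theorem stmt7
    (n : ℕ) (hn : 2 ≤ n)
    (Γ : Set (EV n)) (hΓo : IsOpen Γ) (hΓs : PermSymm Γ) (hΓc : Convex ℝ Γ)
    (hΓcone : IsConeSet Γ) (hΓpos : posCone n ⊆ Γ)
    (γ : EV n → ℝ)
    (hγsm : ContDiffOn ℝ (⊤ : ℕ∞) γ Γ)
    (hγpos : ∀ x ∈ Γ, 0 < γ x)
    (hγsymm : ∀ (σ : Equiv.Perm (Fin n)), ∀ x ∈ Γ, γ (WithLp.toLp 2 (fun i => x (σ i))) = γ x)
    (hγmono : ∀ x ∈ Γ, ∀ (i : Fin n) (t : ℝ), 0 < t →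
      WithLp.toLp 2 (fun j => if j = i then x j + t else x j) ∈ Γ →
      γ x < γ (WithLp.toLp 2 (fun j => if j = i then x j + t else x j)))
    (hγhom : ∀ c : ℝ, 0 < c → ∀ x ∈ Γ, γ (c • x) = c * γ x)
    (hγsic : StrictConcaveOn ℝ (posCone n) (fun x : EV n => - γ (WithLp.toLp 2 (fun i => (x i)⁻¹))))
    (mStar : ℕ) (hmStar : IsLeast {m : ℕ | gammaPlus n m ⊆ Γ} mStar)
    (mIC : ℕ)
    (hmIC : IsLeast {m : ℕ | mStar ≤ m ∧ ∀ m', m ≤ m' → m' ≤ n →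
      StrictInvConcave m' (fun x => γ (padZero n m' x))} mIC)
    (Γ' : Set (EV n)) (hΓ'cl : IsClosed Γ') (hΓ's : PermSymm Γ') (hΓ'c : Convex ℝ Γ')
    (hΓ'cone : IsConeSet Γ') (hΓ'sub : Γ' ⊆ closure (gammaPlus n n))
    :
    (∃ δ : ℝ, 0 < δ ∧ ∀ m < mIC, ∀ x ∈ Γ', x ≠ 0 →
      δ ≤ Metric.infDist (‖x‖⁻¹ • x) (gammaPlus n m)) ↔
    (∃ ρ : ℝ, 0 < ρ ∧ ∀ x ∈ Γ', x ≠ 0 → ∀ T : Finset (Fin n), T.card = n - mIC + 1 →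
      ρ ≤ (∑ i ∈ T, x i) / (∑ i, x i)) := by
  have hn0 : 0 < n := by omega
  -- coordinates of elements of Γ' are nonnegative
  have hnonneg : ∀ x ∈ Γ', ∀ i, 0 ≤ x i := by
    intro x hx i
    have hcl : IsClosed {y : EV n | 0 ≤ y i} :=
      isClosed_le continuous_const (EuclideanSpace.proj (𝕜 := ℝ) i).continuous
    have hsub : gammaPlus n n ⊆ {y : EV n | 0 ≤ y i} := fun y hy => hy.1 i
    exact closure_minimal hsub hcl (hΓ'sub hx)
  -- the sum of coordinates is positive for nonzero elements of Γ'
  have hsumpos : ∀ x ∈ Γ', x ≠ 0 → 0 < ∑ i, x i := by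
    intro x hx hx0
    have hex : ∃ i, x i ≠ 0 := by
      by_contra h; push_neg at h
      exact hx0 (by ext i; exact h i)
    obtain ⟨i, hi⟩ := hex
    have hipos : 0 < x i := lt_of_le_of_ne (hnonneg x hx i) (Ne.symm hi)
    exact lt_of_lt_of_le hipos
      (Finset.single_le_sum (fun j _ => hnonneg x hx j) (Finset.mem_univ i))
  -- coordinates of scalar multiples
  have hsmul : ∀ (c : ℝ) (v : EV n) (i : Fin n), (c • v) i = c * v i := fun c v i => rfl
  -- mStar ≤ n
  have hmStarn : mStar ≤ n := by
    apply hmStar.2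
    intro x hx
    apply hΓpos
    intro i
    have h2 := hx.2
    have huniv : (Finset.univ.filter fun i => 0 < x i) = Finset.univ :=
      Finset.eq_univ_of_card _ (by rw [h2, Fintype.card_fin])
    have := Finset.eq_univ_iff_forall.mp huniv i
    exact (Finset.mem_filter.mp this).2
  -- padZero n n is the identity
  have hpadn : ∀ x : Fin n → ℝ, padZero n n x = WithLp.toLp 2 x := by
    intro x; ext i
    have h0 : ¬ ((i : ℕ) < n - n) := by omega
    show (if h : (i : ℕ) < n - n then 0 else x ⟨(i : ℕ) - (n - n), by omega⟩) = x i
    rw [dif_neg h0]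
    congr 1
    ext
    simp
  -- γ_n is strictly inverse-concave
  have hsicn : StrictInvConcave n (fun x => γ (padZero n n x)) := by
    unfold StrictInvConcave
    have heq : (fun x : Fin n → ℝ => - γ (padZero n n (fun i => (x i)⁻¹))) =
        (fun x : Fin n → ℝ => - γ (WithLp.toLp 2 (fun i => (x i)⁻¹))) := by
      funext x; rw [hpadn]
    rw [heq]
    refine ⟨?_, fun x hx y hy hxy a b ha hb hab => ?_⟩
    · intro x hx y hy a b ha hb hab i
      exact hγsic.1 (show WithLp.toLp 2 x ∈ posCone n from hx)
        (show WithLp.toLp 2 y ∈ posCone n from hy) ha hb hab i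
    · exact hγsic.2 (show WithLp.toLp 2 x ∈ posCone n from hx)
        (show WithLp.toLp 2 y ∈ posCone n from hy)
        (fun h => hxy (congrArg WithLp.ofLp h)) ha hb hab
  -- mIC ≤ n
  have hmICn : mIC ≤ n := by
    apply hmIC.2
    refine ⟨hmStarn, fun m' h1 h2 => ?_⟩
    have : m' = n := le_antisymm h2 h1
    subst this
    exact hsicn
  constructor
  · -- uniformity ⇒ uniform k-positivity
    rintro ⟨δ, hδ, hδall⟩
    refine ⟨δ ^ 2 / n, by positivity, ?_⟩
    intro x hx hx0 T hT
    have hTle : T.card ≤ n := by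
      simpa using Finset.card_le_univ T
    have hmIC1 : 1 ≤ mIC := by omega
    have hnx : ‖x‖ ≠ 0 := norm_ne_zero_iff.mpr hx0
    have hnxpos : 0 < ‖x‖ := norm_pos_iff.mpr hx0
    set y : EV n := ‖x‖⁻¹ • x with hy
    have hyi : ∀ i, y i = ‖x‖⁻¹ * x i := fun i => rfl
    have hyn : ‖y‖ = 1 := by
      rw [hy, norm_smul, norm_inv, norm_norm, inv_mul_cancel₀ hnx]
    have hynn : ∀ i, 0 ≤ y i := fun i => by
      rw [hyi]; exact mul_nonneg (by positivity) (hnonneg x hx i)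
    have hyle1 : ∀ i, y i ≤ 1 := by
      intro i
      have h1 : y i ^ 2 ≤ ∑ j, y j ^ 2 :=
        Finset.single_le_sum (f := fun j => y j ^ 2) (fun j _ => sq_nonneg _)
          (Finset.mem_univ i)
      have h2 : ∑ j, y j ^ 2 = 1 := by rw [← ev_norm_sq, hyn]; norm_num
      exact (sq_le_one_iff₀ (hynn i)).mp (h1.trans_eq h2)
    -- project y onto the coordinates off T
    set z : EV n := WithLp.toLp 2 (fun i => if i ∈ T then 0 else y i) with hz
    have hzi : ∀ i, z i = if i ∈ T then 0 else y i := fun i => rfl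
    have hzmem : z ∈ gammaPlus n ((Finset.univ.filter fun i => 0 < z i).card) := by
      refine ⟨fun i => ?_, rfl⟩
      rw [hzi]; split
      · exact le_refl _
      · exact hynn i
    have hzcard : (Finset.univ.filter fun i => 0 < z i).card < mIC := by
      have hsub : (Finset.univ.filter fun i => 0 < z i) ⊆ Tᶜ := by
        intro i hi
        rcases Finset.mem_filter.mp hi with ⟨-, hpos⟩
        rw [Finset.mem_compl]
        intro hiT
        rw [hzi, if_pos hiT] at hpos
        exact lt_irrefl _ hpos
      have hcc := Finset.card_le_card hsub
      rw [Finset.card_compl, Fintype.card_fin, hT] at hcc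
      omega
    have hδd : δ ≤ dist y z :=
      le_trans (hδall _ hzcard x hx hx0) (Metric.infDist_le_dist_of_mem hzmem)
    have hd2 : dist y z ^ 2 = ∑ i ∈ T, y i ^ 2 := by
      rw [ev_dist_sq n y z,
        ← Finset.sum_subset (Finset.subset_univ T) (fun i _ hiT => by
          rw [hzi, if_neg hiT]; ring)]
      refine Finset.sum_congr rfl fun i hi => ?_
      rw [hzi, if_pos hi, sub_zero]
    have hδ2T : δ ^ 2 ≤ ∑ i ∈ T, y i := by
      have h1 : δ ^ 2 ≤ dist y z ^ 2 := pow_le_pow_left₀ (le_of_lt hδ) hδd 2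
      rw [hd2] at h1
      refine h1.trans (Finset.sum_le_sum fun i _ => ?_)
      have h3 := hyle1 i; have h4 := hynn i; nlinarith
    have hsumyle : ∑ i, y i ≤ (n : ℝ) := by
      have h5 := Finset.sum_le_card_nsmul Finset.univ y 1 (fun i _ => hyle1 i)
      simpa using h5
    have hsx : 0 < ∑ i, x i := hsumpos x hx hx0
    rw [div_le_div_iff₀ (by positivity) hsx]
    have hTx : ∑ i ∈ T, x i = ‖x‖ * ∑ i ∈ T, y i := by
      rw [Finset.mul_sum]
      refine Finset.sum_congr rfl fun i _ => ?_
      rw [hyi]; field_simp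
    have hx_sum : ∑ i, x i = ‖x‖ * ∑ i, y i := by
      rw [Finset.mul_sum]
      refine Finset.sum_congr rfl fun i _ => ?_
      rw [hyi]; field_simp
    rw [hTx, hx_sum]
    have hTynn : (0:ℝ) ≤ ∑ i ∈ T, y i := Finset.sum_nonneg fun i _ => hynn i
    have hynn' : (0:ℝ) ≤ ∑ i, y i := Finset.sum_nonneg fun i _ => hynn i
    have hkey : δ ^ 2 * (∑ i, y i) ≤ (∑ i ∈ T, y i) * n :=
      mul_le_mul hδ2T hsumyle hynn' hTynn
    nlinarith [hnxpos, hkey, sq_nonneg δ]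
  · -- uniform k-positivity ⇒ uniformity
    rintro ⟨ρ, hρ, hρall⟩
    by_cases hmic0 : mIC = 0
    · exact ⟨1, one_pos, fun m hm => by omega⟩
    have hk1 : 1 ≤ n - mIC + 1 := by omega
    refine ⟨ρ / ((n - mIC + 1 : ℕ) : ℝ), div_pos hρ (by exact_mod_cast hk1), ?_⟩
    intro m hm x hx hx0
    have hnx : ‖x‖ ≠ 0 := norm_ne_zero_iff.mpr hx0
    have hnxpos : 0 < ‖x‖ := norm_pos_iff.mpr hx0
    set y : EV n := ‖x‖⁻¹ • x with hy
    have hyi : ∀ i, y i = ‖x‖⁻¹ * x i := fun i => rfl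
    have hne' : (gammaPlus n m).Nonempty := gp_nonempty n m (le_trans (le_of_lt hm) hmICn)
    rw [Metric.infDist_eq_iInf]
    haveI : Nonempty (gammaPlus n m) := hne'.to_subtype
    apply le_ciInf
    rintro ⟨z, hznn, hzcard⟩
    have hcompl : n - mIC + 1 ≤ ((Finset.univ.filter fun i => 0 < z i)ᶜ).card := by
      rw [Finset.card_compl, Fintype.card_fin, hzcard]; omega
    obtain ⟨T', hT'sub, hT'card⟩ := Finset.exists_subset_card_eq hcompl
    have hzero : ∀ i ∈ T', z i = 0 := by
      intro i hi
      have hmem := hT'sub hi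
      rw [Finset.mem_compl, Finset.mem_filter] at hmem
      push_neg at hmem
      exact le_antisymm (hmem (Finset.mem_univ i)) (hznn i)
    have hρ' := hρall x hx hx0 T' hT'card
    have hsx : 0 < ∑ i, x i := hsumpos x hx hx0
    have hTx : ρ * ∑ i, x i ≤ ∑ i ∈ T', x i := (le_div_iff₀ hsx).mp hρ'
    have hnormle : ‖x‖ ≤ ∑ i, x i := by
      have h1 : ‖x‖ ^ 2 = ∑ i, x i ^ 2 := ev_norm_sq n x
      have h2 : ∑ i, x i ^ 2 ≤ (∑ i, x i) ^ 2 :=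
        Finset.sum_sq_le_sq_sum_of_nonneg (fun i _ => hnonneg x hx i)
      nlinarith [norm_nonneg x]
    have hsumT'y : ρ ≤ ∑ i ∈ T', y i := by
      have hstep : ρ * ‖x‖ ≤ ∑ i ∈ T', x i :=
        le_trans (by nlinarith) hTx
      have hyy : ∑ i ∈ T', y i = ‖x‖⁻¹ * ∑ i ∈ T', x i := by
        rw [Finset.mul_sum]
        exact Finset.sum_congr rfl fun i _ => hyi i
      rw [hyy]
      calc ρ = ‖x‖⁻¹ * (ρ * ‖x‖) := by field_simp
        _ ≤ ‖x‖⁻¹ * ∑ i ∈ T', x i :=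
            mul_le_mul_of_nonneg_left hstep (by positivity)
    have hT'ne : T'.Nonempty := Finset.card_pos.mp (by omega)
    have hkR : (0:ℝ) < ((n - mIC + 1 : ℕ) : ℝ) := by exact_mod_cast hk1
    have hex : ∃ i ∈ T', ρ / ((n - mIC + 1 : ℕ) : ℝ) ≤ y i := by
      by_contra hc
      push_neg at hc
      have hlt : ∑ i ∈ T', y i < ∑ _i ∈ T', (ρ / ((n - mIC + 1 : ℕ) : ℝ)) :=
        Finset.sum_lt_sum_of_nonempty hT'ne hc
      rw [Finset.sum_const, hT'card, nsmul_eq_mul] at hlt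
      have heq : ((n - mIC + 1 : ℕ) : ℝ) * (ρ / ((n - mIC + 1 : ℕ) : ℝ)) = ρ := by
        rw [mul_comm, div_mul_cancel₀ _ (ne_of_gt hkR)]
      rw [heq] at hlt
      linarith
    obtain ⟨i0, hi0T, hi0⟩ := hex
    have hzi0 : z i0 = 0 := hzero i0 hi0T
    calc ρ / ((n - mIC + 1 : ℕ) : ℝ) ≤ y i0 := hi0
      _ ≤ |y i0 - z i0| := by rw [hzi0, sub_zero]; exact le_abs_self _
      _ ≤ dist y z := ev_coord_le_dist n y z i0
end
end
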